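/- arXiv:1908.03268 — 2 statements merged into one kernel-verified Lean document; each statement's English description precedes it below -/
import Mathlib

section
/- Every second-countable metric-étale space over a quasi-Polish space is quasi-Polish. -/
open Set Topology

/-- A `Π⁰₂` subset of a topological space: a countable intersection of sets
of the form (closed ∪ open). -/
def IsPi02 {X : Type*} [TopologicalSpace X] (A : Set X) : Prop :=
  ∃ C O : ℕ → Set X, (∀ n, IsClosed (C n)) ∧ (∀ n, IsOpen (O n)) ∧
    A = ⋂ n, C n ∪ O n

/-- A quasi-Polish space: homeomorphic to a `Π⁰₂` subspace of `𝕊^ℕ`, where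
`𝕊 = Prop` is the Sierpiński space. -/
def IsQuasiPolish (X : Type*) [TopologicalSpace X] : Prop :=
  ∃ A : Set (ℕ → Prop), IsPi02 A ∧ Nonempty (X ≃ₜ ↥A)

/-! ### Topometric and metric-étale spaces. -/

/-- The data `(d, p)` makes a topological space `A` into a metric-étale space
over `X`: `A` is a complete topometric space with metric `d` of diameter ≤ 1,
`p` is a topologically open continuous map, `d` is discrete between distinct
fibers, and for each `r > 0` the set `{(a,b) ∈ A ×_X A : d(a,b) < r}` is open
in the fiber product. -/
structure IsMetricEtale {A X : Type*} [TopologicalSpace A] [TopologicalSpace X]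
    (d : A → A → ℝ) (p : A → X) : Prop where
  d_nonneg : ∀ a b, 0 ≤ d a b
  d_le_one : ∀ a b, d a b ≤ 1
  d_self : ∀ a, d a a = 0
  d_eq_zero : ∀ a b, d a b = 0 → a = b
  d_symm : ∀ a b, d a b = d b a
  d_triangle : ∀ a b c, d a c ≤ d a b + d b c
  complete : ∀ u : ℕ → A,
    (∀ ε : ℝ, 0 < ε → ∃ N, ∀ m ≥ N, ∀ n ≥ N, d (u m) (u n) < ε) →
    ∃ a, ∀ ε : ℝ, 0 < ε → ∃ N, ∀ n ≥ N, d (u n) a < ε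
  topometric : ∀ V : Set A, IsOpen V → ∃ U : A → ℝ,
    (∀ r : ℝ, IsOpen {a | U a < r}) ∧
    (∀ a, U a = ⨅ b, min 1 (d a b + U b)) ∧
    V = {a | U a < 1}
  proj_cont : Continuous p
  proj_open : IsOpenMap p
  d_fiber : ∀ a b, p a ≠ p b → d a b = 1
  d_open : ∀ r : ℝ, 0 < r →
    IsOpen {q : {q : A × A // p q.1 = p q.2} | d q.val.1 q.val.2 < r}

/-!
Choose a countable basis `Vⱼ` of `A` and, by the topometric axiom, open `d`-invariant grey sets
`Uⱼ` with `Vⱼ = {Uⱼ < 1}`; invariance makes every `Uⱼ` `1`-Lipschitz for `d`. A point `a` is coded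
by `p a` together with the set of pairs `(j, q) ∈ ℕ × ℚ` with `Uⱼ a < q`; this embeds `A` into the
quasi-Polish space `X × 𝕊^(ℕ × ℚ)`, and the image is cut out by countably many conditions of the
form "open ⇒ open". Besides roundedness and the compatibility of the two components, a code must
admit arbitrarily fine refinements realised in its fibre by sets of small fibrewise diameter, and
it must contain every bound that such realisations force. For a point satisfying these conditions
the refinements produce a `d`-Cauchy sequence inside one fibre, and its limit, which exists by
completeness, has the given code.
-/

open Filter TopologicalSpace

section Pi02

variable {X : Type*} [TopologicalSpace X]

lemma isPi02_iInter_union {ι : Type*} [Countable ι] {C O : ι → Set X}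
    (hC : ∀ i, IsClosed (C i)) (hO : ∀ i, IsOpen (O i)) : IsPi02 (⋂ i, C i ∪ O i) := by
  obtain ⟨e, he⟩ := exists_surjective_nat (Option ι)
  refine ⟨fun n => (e n).elim univ C, fun n => (e n).elim ∅ O, fun n => ?_, fun n => ?_, ?_⟩
  · dsimp only; cases e n <;> simp [hC]
  · dsimp only; cases e n <;> simp [hO]
  · rw [he.iInter_comp fun o => o.elim univ C ∪ o.elim ∅ O, iInter_option]
    simp

lemma IsPi02.iInter {ι : Type*} [Countable ι] {s : ι → Set X} (hs : ∀ i, IsPi02 (s i)) :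
    IsPi02 (⋂ i, s i) := by
  choose C O hC hO hs using hs
  have : ⋂ i, s i = ⋂ k : ι × ℕ, C k.1 k.2 ∪ O k.1 k.2 := by
    ext; simp [hs]
  exact this ▸ isPi02_iInter_union (fun k => hC k.1 k.2) (fun k => hO k.1 k.2)

lemma IsPi02.inter {s t : Set X} (hs : IsPi02 s) (ht : IsPi02 t) : IsPi02 (s ∩ t) := by
  rw [inter_eq_iInter]
  exact IsPi02.iInter (Bool.forall_bool.2 ⟨ht, hs⟩)

lemma IsPi02.setOf_forall {ι : Type*} [Countable ι] {P : ι → X → Prop}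
    (h : ∀ i, IsPi02 {x | P i x}) : IsPi02 {x | ∀ i, P i x} :=
  ofPred_forall P ▸ IsPi02.iInter h

lemma isPi02_setOf_imp {P Q : X → Prop} (hP : IsOpen {x | P x}) (hQ : IsOpen {x | Q x}) :
    IsPi02 {x | P x → Q x} :=
  ⟨fun _ => {x | P x}ᶜ, fun _ => {x | Q x}, fun _ => hP.isClosed_compl, fun _ => hQ, by
    ext; simp [imp_iff_not_or]⟩

lemma IsPi02.preimage {Y : Type*} [TopologicalSpace Y] {f : X → Y} (hf : Continuous f)
    {s : Set Y} (hs : IsPi02 s) : IsPi02 (f ⁻¹' s) := by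
  obtain ⟨C, O, hC, hO, rfl⟩ := hs
  exact ⟨fun n => f ⁻¹' C n, fun n => f ⁻¹' O n, fun n => (hC n).preimage hf,
    fun n => (hO n).preimage hf, by simp [preimage_iInter, preimage_union]⟩

lemma IsPi02.image_val {S : Set X} (hS : IsPi02 S) {B : Set S} (hB : IsPi02 B) :
    IsPi02 (Subtype.val '' B) := by
  obtain ⟨C, O, hC, hO, rfl⟩ := hB
  choose C' hC' hCC' using fun n => IsInducing.subtypeVal.isClosed_iff.1 (hC n)
  choose O' hO' hOO' using fun n => IsInducing.subtypeVal.isOpen_iff.1 (hO n)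
  have : ⋂ n, C n ∪ O n = Subtype.val ⁻¹' ⋂ n, C' n ∪ O' n := by
    simp [← hCC', ← hOO']
  rw [this, Subtype.image_preimage_coe]
  exact hS.inter ⟨C', O', hC', hO', rfl⟩

lemma isOpen_setOf_forall_mem_finset {X α : Type*} [TopologicalSpace X] {s : Finset α}
    {P : α → X → Prop} (h : ∀ i ∈ s, IsOpen {x | P i x}) : IsOpen {x | ∀ i ∈ s, P i x} := by
  convert isOpen_biInter_finset h
  ext
  simp

lemma isOpen_setOf_snd_apply {X κ : Type*} [TopologicalSpace X] (k : κ) :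
    IsOpen {z : X × (κ → Prop) | z.2 k} :=
  continuous_Prop.1 ((continuous_apply k).comp continuous_snd)

end Pi02

section QuasiPolish

variable {X Y Z : Type*} [TopologicalSpace X] [TopologicalSpace Y] [TopologicalSpace Z]

lemma IsQuasiPolish.t0Space (hX : IsQuasiPolish X) : T0Space X := by
  obtain ⟨S, -, ⟨h⟩⟩ := hX
  exact h.isEmbedding.t0Space

lemma IsQuasiPolish.of_isEmbedding (hY : IsQuasiPolish Y) {f : Z → Y} (hf : IsEmbedding f)
    (hr : IsPi02 (range f)) : IsQuasiPolish Z := by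
  obtain ⟨S, hS, ⟨h⟩⟩ := hY
  have hg : IsEmbedding (Subtype.val ∘ h ∘ f) :=
    IsEmbedding.subtypeVal.comp (h.isEmbedding.comp hf)
  refine ⟨_, ?_, ⟨hg.toHomeomorph⟩⟩
  rw [range_comp, range_comp, ← h.preimage_symm]
  exact hS.image_val (hr.preimage h.symm.continuous)

lemma isQuasiPolish_pi_prop (ι : Type*) [Countable ι] [Infinite ι] :
    IsQuasiPolish (ι → Prop) := by
  obtain ⟨_⟩ := nonempty_denumerable ι
  exact ⟨univ, ⟨fun _ => univ, fun _ => univ, fun _ => isClosed_univ, fun _ => isOpen_univ,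
    by simp⟩, ⟨(Homeomorph.piCongrLeft (Y := fun _ => Prop) (Denumerable.eqv ι)).trans
      (Homeomorph.Set.univ _).symm⟩⟩

lemma IsQuasiPolish.prod_pi_prop (hX : IsQuasiPolish X) (ι : Type*) [Countable ι] :
    IsQuasiPolish (X × (ι → Prop)) := by
  obtain ⟨S, hS, ⟨h⟩⟩ := hX
  let e : (ℕ ⊕ ι → Prop) ≃ₜ (ℕ → Prop) × (ι → Prop) := Homeomorph.sumArrowHomeomorphProdArrow
  have hf : IsEmbedding (e.symm ∘ Prod.map (Subtype.val ∘ h) id) :=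
    e.symm.isEmbedding.comp ((IsEmbedding.subtypeVal.comp h.isEmbedding).prodMap .id)
  refine (isQuasiPolish_pi_prop (ℕ ⊕ ι)).of_isEmbedding hf ?_
  rw [range_comp, range_prodMap, range_comp, h.range_coe, image_univ, Subtype.range_coe,
    range_id, prod_univ, e.image_symm]
  exact (hS.preimage continuous_fst).preimage e.continuous

end QuasiPolish

lemma le_dist_add_of_eq_iInf {A : Type*} {d : A → A → ℝ} {U : A → ℝ}
    (hd0 : ∀ a b, 0 ≤ d a b) (htri : ∀ a b c, d a c ≤ d a b + d b c)
    (hU : ∀ a, U a = ⨅ b, min 1 (d a b + U b)) (a b : A) : U a ≤ d a b + U b := by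
  set f : A → A → ℝ := fun a b => min 1 (d a b + U b)
  have hshift : ∀ a a', BddBelow (range (f a')) → BddBelow (range (f a)) := by
    rintro a a' ⟨M, hM⟩
    refine ⟨M - d a' a, forall_mem_range.2 fun c => ?_⟩
    have h₁ : M ≤ min 1 (d a' c + U c) := hM (mem_range_self c)
    have h₂ := htri a' a c
    have h₃ := hd0 a' a
    have h₄ := min_le_left 1 (d a' c + U c)
    have h₅ := min_le_right 1 (d a' c + U c)
    exact le_min (by linarith) (by linarith)
  -- An unbounded infimum is `0` in `ℝ`; if one were unbounded, all would be by `hshift`, so `U = 0`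
  -- and the infima would be bounded after all.
  have hbdd : BddBelow (range (f a)) := by
    by_contra hnot
    have hU0 : ∀ b, U b = 0 := fun b =>
      (hU b).trans (Real.iInf_of_not_bddBelow fun h => hnot (hshift a b h))
    exact hnot ⟨0, forall_mem_range.2 fun c => by simp [f, hU0, hd0]⟩
  calc U a = ⨅ b, f a b := hU a
    _ ≤ f a b := ciInf_le hbdd b
    _ ≤ d a b + U b := min_le_right _ _

lemma exists_seq_finset_iUnion_eq {α : Type*} [Countable α] (T : Set α) :
    ∃ G : ℕ → Finset α, ⋃ n, (G n : Set α) = T := by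
  rcases T.eq_empty_or_nonempty with rfl | hT
  · exact ⟨fun _ => ∅, by simp⟩
  · obtain ⟨g, rfl⟩ := T.to_countable.exists_eq_range hT
    exact ⟨fun n => {g n}, by simp [iUnion_singleton_eq_range]⟩

section Codes

variable {A X ι : Type*} {d : A → A → ℝ} {p : A → X} {U : ι → A → ℝ} {x : X} {y : ι × ℚ → Prop}

def IsFiberwiseSmall (d : A → A → ℝ) (p : A → X) (ε : ℝ) (s : Set A) : Prop :=
  ∀ a ∈ s, ∀ b ∈ s, p a = p b → d a b < ε

lemma IsFiberwiseSmall.mono {ε : ℝ} {s t : Set A} (h : IsFiberwiseSmall d p ε t) (hst : s ⊆ t) :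
    IsFiberwiseSmall d p ε s :=
  fun a ha b hb => h a (hst ha) b (hst hb)

def cell (U : ι → A → ℝ) (c : Finset (ι × ℚ)) : Set A := {a | ∀ jq ∈ c, U jq.1 a < jq.2}

lemma cell_anti {c c' : Finset (ι × ℚ)} (h : c ⊆ c') : cell U c' ⊆ cell U c :=
  fun _ ha jq hjq => ha jq (h hjq)

def code (p : A → X) (U : ι → A → ℝ) (a : A) : X × (ι × ℚ → Prop) :=
  (p a, fun jq => U jq.1 a < jq.2)

structure IsCode (d : A → A → ℝ) (p : A → X) (U : ι → A → ℝ) (x : X) (y : ι × ℚ → Prop) :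
    Prop where
  rounded : ∀ jq : ι × ℚ, y jq → ∃ q < jq.2, y (jq.1, q)
  fiber : ∀ c, x ∈ p '' cell U c → ∃ c', cell U c' ⊆ p ⁻¹' (p '' cell U c) ∧ ∀ jq ∈ c', y jq
  cauchy : ∀ (n : ℕ) (c : Finset (ι × ℚ)), (∀ jq ∈ c, y jq) → ∃ c', c ⊆ c' ∧ (∀ jq ∈ c', y jq) ∧
    IsFiberwiseSmall d p (1 / (n + 1)) (cell U c') ∧ x ∈ p '' cell U c'
  forced : ∀ (jq : ι × ℚ) (n : ℕ) (c : Finset (ι × ℚ)),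
    IsFiberwiseSmall d p (1 / (n + 1)) (cell U c) → (∀ kr ∈ c, y kr) →
    x ∈ p '' ({a | U jq.1 a + 1 / (n + 1) < jq.2} ∩ cell U c) → y jq

lemma IsCode.exists_chain [Countable ι] (hz : IsCode d p U x y) :
    ∃ c : ℕ → Finset (ι × ℚ), Monotone c ∧ (∀ jq, y jq → ∃ n, jq ∈ c n) ∧ ∀ n : ℕ,
      (∀ jq ∈ c n, y jq) ∧ IsFiberwiseSmall d p (1 / (n + 1)) (cell U (c n)) ∧
        x ∈ p '' cell U (c n) := by
  classical
  obtain ⟨G, hG⟩ := exists_seq_finset_iUnion_eq {jq | y jq}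
  have hGy : ∀ n, ∀ jq ∈ G n, y jq := fun n jq h => hG.subset (mem_iUnion_of_mem n h)
  choose! step hstep_sub hstep using fun n c (hc : ∀ jq ∈ c, y jq) =>
    hz.cauchy n (c ∪ G n) (Finset.forall_mem_union.2 ⟨hc, hGy n⟩)
  obtain ⟨c, hc0, hcs⟩ : ∃ c : ℕ → Finset (ι × ℚ), c 0 = ∅ ∧ ∀ n, c (n + 1) = step n (c n) :=
    ⟨fun n => Nat.rec ∅ (fun n c => step n c) n, rfl, fun _ => rfl⟩
  have hsat : ∀ n, ∀ jq ∈ c n, y jq := by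
    intro n
    induction n with
    | zero => simp [hc0]
    | succ n ih => rw [hcs]; exact (hstep n _ ih).1
  refine ⟨fun n => c (n + 1), monotone_nat_of_le_succ fun n => ?_, fun jq hjq => ?_,
    fun n => by dsimp only; rw [hcs]; exact hstep n _ (hsat n)⟩
  · rw [hcs (n + 1)]
    exact Finset.subset_union_left.trans (hstep_sub _ _ (hsat _))
  · obtain ⟨n, hn⟩ := mem_iUnion.1 (hG.symm.subset hjq)
    refine ⟨n, ?_⟩
    dsimp only
    rw [hcs]
    exact hstep_sub n _ (hsat n) (Finset.mem_union_right _ hn)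

end Codes

section MetricEtale

variable {A X : Type*} [TopologicalSpace A] [TopologicalSpace X] {d : A → A → ℝ} {p : A → X}

lemma IsMetricEtale.exists_grey (hme : IsMetricEtale d p) {W : Set A} (hW : IsOpen W) :
    ∃ U : A → ℝ, (∀ r : ℝ, IsOpen {a | U a < r}) ∧ (∀ a b, U a ≤ d a b + U b) ∧
      W = {a | U a < 1} := by
  obtain ⟨U, hopen, hinv, rfl⟩ := hme.topometric W hW
  exact ⟨U, hopen, le_dist_add_of_eq_iInf hme.d_nonneg hme.d_triangle hinv, rfl⟩

lemma IsMetricEtale.tendsto_nhds_of_tendsto_dist (hme : IsMetricEtale d p) {α : Type*}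
    {l : Filter α} {u : α → A} {a : A} (h : Tendsto (fun n => d (u n) a) l (𝓝 0)) :
    Tendsto u l (𝓝 a) := by
  refine tendsto_nhds.2 fun W hW haW => ?_
  obtain ⟨U, -, hlip, rfl⟩ := hme.exists_grey hW
  filter_upwards [h.eventually (gt_mem_nhds (sub_pos.2 haW))] with n hn
  exact (hlip (u n) a).trans_lt (by linarith)

lemma IsMetricEtale.exists_isOpen_isFiberwiseSmall (hme : IsMetricEtale d p) (a : A) {ε : ℝ}
    (hε : 0 < ε) : ∃ W, IsOpen W ∧ a ∈ W ∧ IsFiberwiseSmall d p ε W := by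
  obtain ⟨O, hO, hOeq⟩ := IsInducing.subtypeVal.isOpen_iff.1 (hme.d_open ε hε)
  have hmem : ∀ b b' (h : p b = p b'), (b, b') ∈ O ↔ d b b' < ε := fun b b' h =>
    Set.ext_iff.1 hOeq ⟨(b, b'), h⟩
  obtain ⟨W₁, W₂, hW₁, hW₂, ha₁, ha₂, hW⟩ :=
    isOpen_prod_iff.1 hO a a ((hmem a a rfl).2 (by rwa [hme.d_self]))
  exact ⟨W₁ ∩ W₂, hW₁.inter hW₂, ⟨ha₁, ha₂⟩, fun b hb b' hb' hp =>
    (hmem b b' hp).1 (hW ⟨hb.1, hb'.2⟩)⟩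

lemma IsMetricEtale.eq_of_specializes (hme : IsMetricEtale d p) {a b : A} (h : b ⤳ a)
    (hp : p a = p b) : a = b := by
  by_contra hab
  have hpos : 0 < d a b := (hme.d_nonneg a b).lt_of_ne fun h0 => hab (hme.d_eq_zero a b h0.symm)
  obtain ⟨W, hW, haW, hsmall⟩ := hme.exists_isOpen_isFiberwiseSmall a hpos
  exact lt_irrefl _ (hsmall a haW b (h.mem_open hW haW) hp)

lemma IsMetricEtale.exists_tendsto_of_isFiberwiseSmall (hme : IsMetricEtale d p) {u : ℕ → A}
    {s : ℕ → Set A} (hs : ∀ n : ℕ, IsFiberwiseSmall d p (1 / (n + 1)) (s n))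
    (hu : ∀ n m, n ≤ m → u m ∈ s n) (hp : ∀ m m', p (u m) = p (u m')) :
    ∃ a, Tendsto (fun m => d (u m) a) atTop (𝓝 0) := by
  refine (hme.complete u fun ε hε => ?_).imp fun a h => ?_
  · obtain ⟨n, hn⟩ := exists_nat_one_div_lt hε
    exact ⟨n, fun m hm m' hm' => (hs n _ (hu n m hm) _ (hu n m' hm') (hp m m')).trans hn⟩
  · refine Metric.tendsto_atTop.2 fun ε hε => (h ε hε).imp fun N hN m hm => ?_
    rw [Real.dist_eq, sub_zero, abs_of_nonneg (hme.d_nonneg _ _)]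
    exact hN m hm

end MetricEtale

section GreyBasis

variable {A X ι : Type*} [TopologicalSpace A] [TopologicalSpace X] {d : A → A → ℝ} {p : A → X}
  {U : ι → A → ℝ} {x : X} {y : ι × ℚ → Prop}

structure IsGreyBasis (d : A → A → ℝ) (U : ι → A → ℝ) : Prop where
  isOpen_lt : ∀ j (r : ℝ), IsOpen {a | U j a < r}
  le_dist_add : ∀ j a b, U j a ≤ d a b + U j b
  isTopologicalBasis : IsTopologicalBasis (range fun j => {a | U j a < 1})

lemma IsMetricEtale.exists_isGreyBasis [SecondCountableTopology A] (hme : IsMetricEtale d p) :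
    ∃ U : countableBasis A → A → ℝ, IsGreyBasis d U := by
  choose U hUo hUl hUeq using fun j : countableBasis A =>
    hme.exists_grey ((isBasis_countableBasis A).isOpen j.2)
  refine ⟨U, hUo, hUl, ?_⟩
  have : (range fun j => {a | U j a < 1}) = countableBasis A := by
    simp_rw [← hUeq]
    exact Subtype.range_coe
  rw [this]
  exact isBasis_countableBasis A

lemma IsGreyBasis.isOpen_cell (hU : IsGreyBasis d U) (c : Finset (ι × ℚ)) :
    IsOpen (cell U c) :=
  isOpen_setOf_forall_mem_finset fun jq _ => hU.isOpen_lt jq.1 jq.2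

lemma IsGreyBasis.exists_cell_subset (hU : IsGreyBasis d U) {W : Set A} {a : A} (hW : W ∈ 𝓝 a) :
    ∃ c, a ∈ cell U c ∧ cell U c ⊆ W := by
  obtain ⟨_, ⟨j, rfl⟩, haj, hjW⟩ := hU.isTopologicalBasis.mem_nhds_iff.1 hW
  obtain ⟨q, hjq, hq⟩ := exists_rat_btwn (show U j a < 1 from haj)
  refine ⟨{(j, q)}, by simpa [cell] using hjq, fun b hb => hjW ?_⟩
  have hb : U j b < q := by simpa [cell] using hb
  exact hb.trans (by exact_mod_cast hq)

lemma IsGreyBasis.tendsto_of_tendsto_dist (hU : IsGreyBasis d U) (hsymm : ∀ a b, d a b = d b a)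
    (j : ι) {α : Type*} {l : Filter α} {u : α → A} {a : A}
    (h : Tendsto (fun n => d (u n) a) l (𝓝 0)) :
    Tendsto (fun n => U j (u n)) l (𝓝 (U j a)) := by
  rw [tendsto_iff_dist_tendsto_zero]
  refine squeeze_zero (fun _ => dist_nonneg) (fun n => ?_) h
  rw [Real.dist_eq, abs_sub_le_iff]
  constructor <;> linarith [hU.le_dist_add j (u n) a, hU.le_dist_add j a (u n), hsymm a (u n)]

lemma IsGreyBasis.isInducing_code (hU : IsGreyBasis d U) (hp : Continuous p) :
    IsInducing (code p U) := by
  have hcont : Continuous (code p U) :=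
    hp.prodMk (continuous_pi fun jq => continuous_Prop.2 (hU.isOpen_lt jq.1 jq.2))
  refine isInducing_iff_nhds.2 fun a => le_antisymm (hcont.tendsto a).le_comap fun W hW => ?_
  obtain ⟨c, hac, hcW⟩ := hU.exists_cell_subset hW
  exact mem_comap.2 ⟨_, (isOpen_setOf_forall_mem_finset fun jq _ =>
    isOpen_setOf_snd_apply jq).mem_nhds hac, hcW⟩

lemma IsMetricEtale.isEmbedding_code (hme : IsMetricEtale d p) (hU : IsGreyBasis d U) :
    IsEmbedding (code p U) := by
  have hind := hU.isInducing_code hme.proj_cont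
  refine ⟨hind, fun a b hab => hme.eq_of_specializes ?_ (congrArg Prod.fst hab)⟩
  exact (hind.inseparable_iff.1 (hab ▸ .rfl)).specializes'

lemma IsMetricEtale.isCode_code (hme : IsMetricEtale d p) (hU : IsGreyBasis d U) (a : A) :
    IsCode d p U (code p U a).1 (code p U a).2 where
  rounded jq h := by
    obtain ⟨q, h₁, h₂⟩ := exists_rat_btwn h
    exact ⟨q, by exact_mod_cast h₂, h₁⟩
  fiber c hc := by
    have hopen : IsOpen (p ⁻¹' (p '' cell U c)) :=
      (hme.proj_open _ (hU.isOpen_cell c)).preimage hme.proj_cont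
    obtain ⟨c', hac', hsub⟩ := hU.exists_cell_subset (hopen.mem_nhds hc)
    exact ⟨c', hsub, hac'⟩
  cauchy n c hc := by
    classical
    obtain ⟨W, hW, haW, hsmall⟩ :=
      hme.exists_isOpen_isFiberwiseSmall a (ε := 1 / (n + 1)) (by positivity)
    obtain ⟨c', hac', hsub⟩ :=
      hU.exists_cell_subset ((hW.inter (hU.isOpen_cell c)).mem_nhds ⟨haW, hc⟩)
    have hac : a ∈ cell U (c ∪ c') := Finset.forall_mem_union.2 ⟨hc, hac'⟩
    exact ⟨c ∪ c', Finset.subset_union_left, hac,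
      hsmall.mono ((cell_anti Finset.subset_union_right).trans (hsub.trans inter_subset_left)),
      a, hac, rfl⟩
  forced jq n c hsmall hc := by
    rintro ⟨b, ⟨hbj, hbc⟩, hpb⟩
    have hab := hsmall a hc b hbc hpb.symm
    have hlip := hU.le_dist_add jq.1 a b
    show U jq.1 a < jq.2
    linarith [show U jq.1 b + 1 / (n + 1) < jq.2 from hbj]

lemma IsCode.specializes (hz : IsCode d p U x y) (hU : IsGreyBasis d U) (hp : Continuous p)
    {a : A} (ha : ∀ jq, y jq → U jq.1 a < jq.2) (hx : x ∈ range p) : p a ⤳ x := by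
  refine specializes_iff_forall_open.2 fun O hO hxO => ?_
  obtain ⟨b, rfl⟩ := hx
  obtain ⟨c, hbc, hcO⟩ := hU.exists_cell_subset ((hO.preimage hp).mem_nhds hxO)
  obtain ⟨c', hc'c, hyc'⟩ := hz.fiber c ⟨b, hbc, rfl⟩
  exact image_subset_iff.2 hcO (hc'c fun jq hjq => ha jq (hyc' jq hjq))

lemma IsMetricEtale.exists_code_eq [T0Space X] [Countable ι] (hme : IsMetricEtale d p)
    (hU : IsGreyBasis d U) (hz : IsCode d p U x y) : ∃ a, code p U a = (x, y) := by
  obtain ⟨c, hc_mono, hc_cover, hc⟩ := hz.exists_chain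
  choose a ha_cell ha_p using fun n => (hc n).2.2
  have ha_mem : ∀ n m, n ≤ m → a m ∈ cell U (c n) :=
    fun n m h => cell_anti (hc_mono h) (ha_cell m)
  obtain ⟨a₀, ha₀⟩ := hme.exists_tendsto_of_isFiberwiseSmall (fun n => (hc n).2.1) ha_mem
    fun m m' => (ha_p m).trans (ha_p m').symm
  have hlim := fun j => hU.tendsto_of_tendsto_dist hme.d_symm j ha₀
  have hy : ∀ jq : ι × ℚ, U jq.1 a₀ < jq.2 ↔ y jq := by
    refine fun ⟨j, q⟩ => ⟨fun h => ?_, fun h => ?_⟩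
    · have hlim' : Tendsto (fun m : ℕ => U j (a m) + 1 / (m + 1)) atTop (𝓝 (U j a₀)) := by
        simpa using (hlim j).add tendsto_one_div_add_atTop_nhds_zero_nat
      obtain ⟨m, hm⟩ := (hlim'.eventually (gt_mem_nhds h)).exists
      exact hz.forced (j, q) m (c m) (hc m).2.1 (hc m).1 ⟨a m, ⟨hm, ha_cell m⟩, ha_p m⟩
    · obtain ⟨q', hq', hyq'⟩ := hz.rounded (j, q) h
      obtain ⟨n, hn⟩ := hc_cover _ hyq'
      have hle : U j a₀ ≤ q' :=
        le_of_tendsto (hlim j) (eventually_atTop.2 ⟨n, fun m hm => (ha_mem n m hm _ hn).le⟩)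
      exact hle.trans_lt (by exact_mod_cast hq')
  have hx : x ⤳ p a₀ := by
    have := (hme.proj_cont.tendsto a₀).comp (hme.tendsto_nhds_of_tendsto_dist ha₀)
    refine specializes_iff_forall_open.2 fun O hO hO₀ => ?_
    obtain ⟨m, hm⟩ := (this.eventually (hO.mem_nhds hO₀)).exists
    exact ha_p m ▸ hm
  have hp : p a₀ = x :=
    ((hz.specializes hU hme.proj_cont (fun jq => (hy jq).2) ⟨a 0, ha_p 0⟩).antisymm hx).eq
  exact ⟨a₀, Prod.ext hp (funext fun jq => propext (hy jq))⟩

lemma IsMetricEtale.isPi02_setOf_isCode [Countable ι] (hme : IsMetricEtale d p)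
    (hU : IsGreyBasis d U) : IsPi02 {z : X × (ι × ℚ → Prop) | IsCode d p U z.1 z.2} := by
  have hsat (c : Finset (ι × ℚ)) : IsOpen {z : X × (ι × ℚ → Prop) | ∀ jq ∈ c, z.2 jq} :=
    isOpen_setOf_forall_mem_finset fun jq _ => isOpen_setOf_snd_apply jq
  have himg {s : Set A} (hs : IsOpen s) : IsOpen {z : X × (ι × ℚ → Prop) | z.1 ∈ p '' s} :=
    (hme.proj_open _ hs).preimage continuous_fst
  have hiff : ∀ z : X × (ι × ℚ → Prop), IsCode d p U z.1 z.2 ↔ _ ∧ _ ∧ _ ∧ _ := fun z =>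
    ⟨fun h => ⟨h.1, h.2, h.3, h.4⟩, fun h => ⟨h.1, h.2.1, h.2.2.1, h.2.2.2⟩⟩
  simp only [hiff, ofPred_and]
  refine .inter ?_ (.inter ?_ (.inter ?_ ?_))
  · refine .setOf_forall fun jq => isPi02_setOf_imp (isOpen_setOf_snd_apply jq) ?_
    rw [ofPred_exists]
    exact isOpen_iUnion fun q => isOpen_const.inter (isOpen_setOf_snd_apply _)
  · refine .setOf_forall fun c => isPi02_setOf_imp (himg (hU.isOpen_cell c)) ?_
    rw [ofPred_exists]
    exact isOpen_iUnion fun c' => isOpen_const.inter (hsat c')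
  · refine .setOf_forall fun n => .setOf_forall fun c => isPi02_setOf_imp (hsat c) ?_
    rw [ofPred_exists]
    exact isOpen_iUnion fun c' => isOpen_const.inter
      ((hsat c').inter (isOpen_const.inter (himg (hU.isOpen_cell c'))))
  · refine .setOf_forall fun jq => .setOf_forall fun n => .setOf_forall fun c => ?_
    have hopen : IsOpen {a | U jq.1 a + 1 / (n + 1) < jq.2} := by
      simpa only [lt_sub_iff_add_lt] using hU.isOpen_lt jq.1 (jq.2 - 1 / (n + 1))
    simp only [← and_imp]
    exact isPi02_setOf_imp
      (isOpen_const.inter ((hsat c).inter (himg (hopen.inter (hU.isOpen_cell c)))))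
      (isOpen_setOf_snd_apply jq)

lemma IsMetricEtale.range_code [T0Space X] [Countable ι] (hme : IsMetricEtale d p)
    (hU : IsGreyBasis d U) : range (code p U) = {z | IsCode d p U z.1 z.2} := by
  ext z
  refine ⟨?_, fun hz => hme.exists_code_eq hU hz⟩
  rintro ⟨a, rfl⟩
  exact hme.isCode_code hU a

end GreyBasis

/-- Every second-countable metric-étale space over a quasi-Polish space is
quasi-Polish. -/
theorem metricEtale_quasiPolish {A X : Type*}
    [TopologicalSpace A] [TopologicalSpace X]
    (hX : IsQuasiPolish X) (d : A → A → ℝ) (p : A → X)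
    (hme : IsMetricEtale d p) (hsc : SecondCountableTopology A) :
    IsQuasiPolish A := by
  have := hX.t0Space
  obtain ⟨U, hU⟩ := hme.exists_isGreyBasis
  refine (hX.prod_pi_prop _).of_isEmbedding (hme.isEmbedding_code hU) ?_
  rw [hme.range_code hU]
  exact hme.isPi02_setOf_isCode hU
end

section
/- (Topological Yoneda lemma for non-Archimedean groupoids) Let G be an open non-Archimedean topological groupoid with basis 𝒰 of open subgroupoids and families 𝒮_U as in the construction of the canonical étale structure M. Then for all objects x, y ∈ G⁰, the map Φ sending a homomorphism h : M_x → M_y to the family (h_U(U_x))_{x ∈ U ∈ 𝒰} is a bijection from Hom_{G⁰}(M)(x,y) onto the inverse limit lim_{x ∈ U ∈ 𝒰} (G/U)_y of the fibers (G/U)_y over y along the projection maps π_{U,V} for U ⊆ V in 𝒰, i.e. onto the set of families (a_U)_{x∈U∈𝒰} with a_U ∈ (G/U)_y and π_{U,V}(a_U) = a_V whenever U ⊆ V. -/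
open Set Topology

attribute [local instance] Classical.propDecidable

/-- A small groupoid, presented on its space of morphisms `G`, with objects
identified with unit morphisms.  `comp g h` is only meaningful when
`src g = tgt h`; its values elsewhere are irrelevant junk. -/
structure Groupoidal (G : Type*) where
  src : G → G
  tgt : G → G
  comp : G → G → G
  inv : G → G
  src_src : ∀ g, src (src g) = src g
  tgt_of_src : ∀ g, tgt (src g) = src g
  src_of_tgt : ∀ g, src (tgt g) = tgt g
  tgt_tgt : ∀ g, tgt (tgt g) = tgt g
  comp_src : ∀ g, comp g (src g) = g
  tgt_comp_self : ∀ g, comp (tgt g) g = g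
  src_comp : ∀ g h, src g = tgt h → src (comp g h) = src h
  tgt_comp : ∀ g h, src g = tgt h → tgt (comp g h) = tgt g
  comp_assoc : ∀ g h k, src g = tgt h → src h = tgt k →
    comp (comp g h) k = comp g (comp h k)
  src_inv : ∀ g, src (inv g) = tgt g
  tgt_inv : ∀ g, tgt (inv g) = src g
  comp_inv_self : ∀ g, comp g (inv g) = tgt g
  inv_comp_self : ∀ g, comp (inv g) g = src g

namespace Groupoidal

variable {G : Type*} (S : Groupoidal G)

/-- The set of objects (= unit morphisms) of the groupoid. -/
def units : Set G := {x | S.src x = x}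

/-- Two morphisms are composable when the source of the first matches the
target of the second. -/
def Composable (g h : G) : Prop := S.src g = S.tgt h

/-- Pointwise product of two subsets of a groupoid. -/
def setMul (A B : Set G) : Set G :=
  {k | ∃ g ∈ A, ∃ h ∈ B, S.Composable g h ∧ k = S.comp g h}

/-- Pointwise inverse of a subset of a groupoid. -/
def setInv (A : Set G) : Set G := S.inv '' A

def IsSymmetric (A : Set G) : Prop := S.setInv A = A

def IsUnital (A : Set G) : Prop := S.src '' A ⊆ A ∧ S.tgt '' A ⊆ A

/-- A subgroupoid: a subset closed under inverse and multiplication. -/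
def IsSubgroupoid (A : Set G) : Prop := S.IsSymmetric A ∧ S.setMul A A ⊆ A

/-- A topological groupoid: all structure maps are continuous (multiplication
on the subspace of composable pairs). -/
structure IsTopological [TopologicalSpace G] : Prop where
  continuous_src : Continuous S.src
  continuous_tgt : Continuous S.tgt
  continuous_inv : Continuous S.inv
  continuous_comp :
    Continuous fun p : {p : G × G // S.Composable p.1 p.2} => S.comp p.1.1 p.1.2

/-- An open topological groupoid: the source map is open. -/
def IsOpenGroupoid [TopologicalSpace G] : Prop := IsOpenMap S.src

/-- A non-Archimedean topological groupoid: every unit morphism has a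
neighborhood basis of open subgroupoids. -/
def IsNonArchimedean [TopologicalSpace G] : Prop :=
  ∀ x ∈ S.units, ∀ W ∈ nhds x, ∃ U : Set G,
    IsOpen U ∧ x ∈ U ∧ U ⊆ W ∧ S.IsSubgroupoid U

/-- A standard Borel groupoid structure: all structure maps are Borel. -/
structure IsBorelGroupoid [MeasurableSpace G] : Prop where
  measurable_src : Measurable S.src
  measurable_tgt : Measurable S.tgt
  measurable_inv : Measurable S.inv
  measurable_comp :
    Measurable fun p : {p : G × G // S.Composable p.1 p.2} => S.comp p.1.1 p.1.2

end Groupoidal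

/-- A σ-locally Polish space: a countable cover by open Polish subspaces. -/
def IsSigmaLocallyPolish (X : Type*) [TopologicalSpace X] : Prop :=
  ∃ V : ℕ → Set X, (∀ n, IsOpen (V n)) ∧ (∀ n, PolishSpace (V n)) ∧
    (⋃ n, V n) = Set.univ

/-- A functor between groupoids presented on their spaces of morphisms. -/
structure GFunctor {G H : Type*} (S : Groupoidal G) (T : Groupoidal H) where
  toFun : G → H
  map_src : ∀ g, toFun (S.src g) = T.src (toFun g)
  map_tgt : ∀ g, toFun (S.tgt g) = T.tgt (toFun g)
  map_comp : ∀ g h, S.Composable g h →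
    toFun (S.comp g h) = T.comp (toFun g) (toFun h)

namespace GFunctor

variable {G H K : Type*} {S : Groupoidal G} {T : Groupoidal H} {R : Groupoidal K}

/-- The identity functor. -/
def id (S : Groupoidal G) : GFunctor S S :=
  ⟨fun g => g, fun _ => rfl, fun _ => rfl, fun _ _ _ => rfl⟩

/-- Composition of functors. -/
def comp (F₂ : GFunctor T R) (F₁ : GFunctor S T) : GFunctor S R where
  toFun := F₂.toFun ∘ F₁.toFun
  map_src g := by simp only [Function.comp_apply, F₁.map_src, F₂.map_src]
  map_tgt g := by simp only [Function.comp_apply, F₁.map_tgt, F₂.map_tgt]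
  map_comp g h hc := by
    have hc' : T.Composable (F₁.toFun g) (F₁.toFun h) := by
      unfold Groupoidal.Composable at hc ⊢
      rw [← F₁.map_src, ← F₁.map_tgt, hc]
    simp only [Function.comp_apply, F₁.map_comp g h hc, F₂.map_comp _ _ hc']

/-- A functor is full if it is surjective on each hom-set. -/
def Full (F : GFunctor S T) : Prop :=
  ∀ x ∈ S.units, ∀ y ∈ S.units, ∀ k : H,
    T.src k = F.toFun x → T.tgt k = F.toFun y →
      ∃ g : G, S.src g = x ∧ S.tgt g = y ∧ F.toFun g = k

/-- A functor is faithful if it is injective on each hom-set. -/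
def Faithful (F : GFunctor S T) : Prop :=
  ∀ g g' : G, S.src g = S.src g' → S.tgt g = S.tgt g' →
    F.toFun g = F.toFun g' → g = g'

end GFunctor

/-- A natural transformation (automatically an isomorphism, between functors
of groupoids); `app` is only meaningful on unit morphisms. -/
structure GNatIso {G H : Type*} {S : Groupoidal G} {T : Groupoidal H}
    (F F' : GFunctor S T) where
  app : G → H
  app_src : ∀ x ∈ S.units, T.src (app x) = F.toFun x
  app_tgt : ∀ x ∈ S.units, T.tgt (app x) = F'.toFun x
  naturality : ∀ g : G,
    T.comp (app (S.tgt g)) (F.toFun g) = T.comp (F'.toFun g) (app (S.src g))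

/-- A Borel functor which is an equivalence of groupoids witnessed by a Borel
inverse functor and Borel natural isomorphisms. -/
def IsBorelEquivalence {G H : Type*} [MeasurableSpace G] [MeasurableSpace H]
    {S : Groupoidal G} {T : Groupoidal H} (F : GFunctor S T) : Prop :=
  Measurable F.toFun ∧
  ∃ F' : GFunctor T S, Measurable F'.toFun ∧
    (∃ α : GNatIso (F.comp F') (GFunctor.id T), Measurable α.app) ∧
    (∃ β : GNatIso (F'.comp F) (GFunctor.id S), Measurable β.app)

namespace Groupoidal

variable {G : Type*} (S : Groupoidal G)

/-- The left translate `g · U` of a subset `U` by a morphism `g`. -/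
def leftTrans (g : G) (U : Set G) : Set G :=
  {k | ∃ u ∈ U, S.Composable g u ∧ k = S.comp g u}

/-- `C` is a left coset of the open subgroupoid `U`. -/
def IsCoset (U C : Set G) : Prop :=
  ∃ g : G, S.src g ∈ U ∧ C = S.leftTrans g U

/-- The space of left cosets `G/U`. -/
def Coset (U : Set G) : Type _ := {C : Set G // S.IsCoset U C}

/-- The quotient map `π_U : σ⁻¹(U) → G/U`. -/
def cosetMk (U : Set G) (g : G) (hg : S.src g ∈ U) : S.Coset U :=
  ⟨S.leftTrans g U, g, hg, rfl⟩

/-- The quotient topology on `G/U`. -/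
def cosetTop [TopologicalSpace G] (U : Set G) :
    TopologicalSpace (S.Coset U) :=
  TopologicalSpace.coinduced
    (fun g : {g : G // S.src g ∈ U} => S.cosetMk U g.val g.prop)
    inferInstance

/-- The fiber `(G/U)_y` of `G/U` over `y` along the target map: cosets all of
whose members have target `y`. -/
def CosetFib (U : Set G) (y : G) : Type _ :=
  {C : S.Coset U // ∀ k ∈ C.val, S.tgt k = y}

/-- The unit coset `U_x ∈ (G/U)_x` for a unit `x ∈ U`. -/
def unitCosetFib (U : Set G) (x : G) (hx : S.src x = x) (hxU : x ∈ U) :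
    S.CosetFib U x :=
  ⟨S.cosetMk U x (by rw [hx]; exact hxU), by
    rintro k ⟨u, hu, hc, rfl⟩
    rw [S.tgt_comp _ _ hc]
    conv_lhs => rw [← hx]
    rw [S.tgt_of_src]
    exact hx⟩

/-- A family of maps `(G/U)_x → (G/U)_y`, `U ∈ 𝒰`, is a homomorphism of the
canonical étale structures `M_x → M_y` when it commutes with all the right
multiplication maps `f_{U,V,T} = (·)·T : G/U → G/V` for `V ∈ 𝒰`, `T ∈ 𝒮 V`
and `U ⊆ T·T⁻¹` (expressed via the underlying sets of cosets). -/
def IsCanonHom (𝒰 : Set (Set G)) (𝒮 : Set G → Set (Set G)) (x y : G)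
    (h : ∀ U : Set G, U ∈ 𝒰 → S.CosetFib U x → S.CosetFib U y) : Prop :=
  ∀ (U : Set G) (hU : U ∈ 𝒰) (V : Set G) (hV : V ∈ 𝒰) (T : Set G),
    T ∈ 𝒮 V → U ⊆ S.setMul T (S.setInv T) →
    ∀ (C : S.CosetFib U x) (D : S.CosetFib V x),
      D.val.val = S.setMul C.val.val T →
      (h V hV D).val.val = S.setMul (h U hU C).val.val T

/-- A family `(a_U)_{x ∈ U ∈ 𝒰}` with `a_U ∈ (G/U)_y` is coherent (i.e. a
member of the inverse limit `lim_{x ∈ U ∈ 𝒰} (G/U)_y`) when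
`π_{U,V}(a_U) = a_V` for `U ⊆ V`, where `π_{U,V} = (·)·V`. -/
def IsCoherent (𝒰 : Set (Set G)) (x y : G)
    (a : ∀ U : Set G, U ∈ 𝒰 → x ∈ U → S.CosetFib U y) : Prop :=
  ∀ (U : Set G) (hU : U ∈ 𝒰) (hxU : x ∈ U)
    (V : Set G) (hV : V ∈ 𝒰) (hxV : x ∈ V), U ⊆ V →
    (a V hV hxV).val.val = S.setMul (a U hU hxU).val.val V

end Groupoidal

/-!
Every coset `C ∈ (G/U)_x` can be written `f_{W,U,R}(W_x) = (x·W)·R` with `R ∈ 𝒮_U` and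
`x ∈ W ⊆ R·R⁻¹`: the sets `π_U(R)` cover `G/U`, and `R·R⁻¹` is an open neighbourhood of `x`
because `σ` is open. Hence a homomorphism satisfies `h_U(C) = h_W(W_x)·R` and is determined by its
values at the unit cosets, which are coherent since `π_{U,V} = f_{U,V,V}`. Conversely, a coherent
family `a` extends by `h_U((x·W)·R) := a_W·R`. This value does not depend on the presentation, even
when `R` ranges over all `U`-invariant `U`-small open sets; and `R·T` is again such a set for `V`
whenever `T ∈ 𝒮_V` and `U ⊆ T·T⁻¹`, which turns `(a_W·R)·T = a_W·(R·T)` into the homomorphism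
property.
-/

namespace Groupoidal

section Algebra

variable {G : Type*} (S : Groupoidal G)

theorem comp_inv_cancel_left {g z : G} (h : S.tgt z = S.tgt g) :
    S.comp g (S.comp (S.inv g) z) = z := by
  rw [← S.comp_assoc g (S.inv g) z (S.tgt_inv g).symm (by rw [S.src_inv, h]),
    S.comp_inv_self, ← h, S.tgt_comp_self]

theorem inv_comp_cancel_left {g z : G} (h : S.src g = S.tgt z) :
    S.comp (S.inv g) (S.comp g z) = z := by
  rw [← S.comp_assoc _ _ _ (S.src_inv g) h, S.inv_comp_self, h, S.tgt_comp_self]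

theorem comp_inv_cancel_right {g t : G} (h : S.src g = S.tgt t) :
    S.comp (S.comp g t) (S.inv t) = g := by
  rw [S.comp_assoc g t _ h (S.tgt_inv t).symm, S.comp_inv_self, ← h, S.comp_src]

theorem inv_comp_cancel_right {g t : G} (h : S.src g = S.src t) :
    S.comp (S.comp g (S.inv t)) t = g := by
  rw [S.comp_assoc g _ t (by rw [h, S.tgt_inv]) (S.src_inv t), S.inv_comp_self, ← h,
    S.comp_src]

theorem inv_inv (g : G) : S.inv (S.inv g) = g := by
  rw [← S.comp_inv_cancel_left (g := g) (z := S.inv (S.inv g)) (by rw [S.tgt_inv, S.src_inv]),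
    S.comp_inv_self, S.tgt_inv, S.comp_src]

theorem inv_comp {g h : G} (hgh : S.src g = S.tgt h) :
    S.inv (S.comp g h) = S.comp (S.inv h) (S.inv g) := by
  have hp : S.tgt (S.inv (S.comp g h)) = S.src h := by rw [S.tgt_inv, S.src_comp g h hgh]
  calc S.inv (S.comp g h)
      = S.comp (S.inv h) (S.comp (S.inv g) (S.comp g (S.comp h (S.inv (S.comp g h))))) := by
        rw [S.inv_comp_cancel_left (by rw [S.tgt_comp _ _ (by rw [hp])]; exact hgh),
          S.inv_comp_cancel_left hp.symm]
    _ = S.comp (S.inv h) (S.inv g) := by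
        rw [← S.comp_assoc g h _ hgh (by rw [hp]), S.comp_inv_self, S.tgt_comp g h hgh,
          ← S.src_inv, S.comp_src]

theorem setInv_eq_preimage (A : Set G) : S.setInv A = S.inv ⁻¹' A := by
  rw [setInv, Set.image_eq_preimage_of_inverse S.inv_inv S.inv_inv]

theorem setMul_mono {A A' B B' : Set G} (hA : A ⊆ A') (hB : B ⊆ B') :
    S.setMul A B ⊆ S.setMul A' B' := by
  rintro k ⟨g, hg, h, hh, hc, rfl⟩
  exact ⟨g, hA hg, h, hB hh, hc, rfl⟩

theorem setMul_assoc (A B C : Set G) :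
    S.setMul (S.setMul A B) C = S.setMul A (S.setMul B C) := by
  ext k
  constructor
  · rintro ⟨_, ⟨a, ha, b, hb, (hab : S.src a = _), rfl⟩, c, hc, (habc : S.src _ = _), rfl⟩
    have hbc : S.src b = S.tgt c := by rw [← S.src_comp a b hab, habc]
    exact ⟨a, ha, S.comp b c, ⟨b, hb, c, hc, hbc, rfl⟩,
      (S.tgt_comp b c hbc).trans hab.symm |>.symm, S.comp_assoc a b c hab hbc⟩
  · rintro ⟨a, ha, _, ⟨b, hb, c, hc, (hbc : S.src b = _), rfl⟩, (habc : S.src a = _), rfl⟩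
    have hab : S.src a = S.tgt b := by rw [habc, S.tgt_comp b c hbc]
    exact ⟨S.comp a b, ⟨a, ha, b, hb, hab, rfl⟩, c, hc,
      (S.src_comp a b hab).trans hbc, (S.comp_assoc a b c hab hbc).symm⟩

theorem setInv_setMul (A B : Set G) :
    S.setInv (S.setMul A B) = S.setMul (S.setInv B) (S.setInv A) := by
  ext k
  constructor
  · rintro ⟨_, ⟨a, ha, b, hb, (hab : S.src a = _), rfl⟩, rfl⟩
    exact ⟨S.inv b, ⟨b, hb, rfl⟩, S.inv a, ⟨a, ha, rfl⟩,
      by rw [Composable, S.src_inv, S.tgt_inv, hab], S.inv_comp hab⟩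
  · rintro ⟨_, ⟨b, hb, rfl⟩, _, ⟨a, ha, rfl⟩, (hba : S.src _ = _), rfl⟩
    have hab : S.src a = S.tgt b := by rw [← S.src_inv, hba, S.tgt_inv]
    exact ⟨S.comp a b, ⟨a, ha, b, hb, hab, rfl⟩, S.inv_comp hab⟩

end Algebra

section Cosets

variable {G : Type*} {S : Groupoidal G} {U V W Q T : Set G}

theorem IsSubgroupoid.inv_mem (hU : S.IsSubgroupoid U) {g : G} (hg : g ∈ U) : S.inv g ∈ U := by
  rw [← hU.1]; exact ⟨g, hg, rfl⟩

theorem IsSubgroupoid.src_mem (hU : S.IsSubgroupoid U) {g : G} (hg : g ∈ U) : S.src g ∈ U := by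
  rw [← S.inv_comp_self]
  exact hU.2 ⟨S.inv g, hU.inv_mem hg, g, hg, S.src_inv g, rfl⟩

theorem IsSubgroupoid.setMul_self (hU : S.IsSubgroupoid U) : S.setMul U U = U :=
  hU.2.antisymm fun g hg ↦
    ⟨g, hg, S.src g, hU.src_mem hg, (S.tgt_of_src g).symm, (S.comp_src g).symm⟩

theorem IsSubgroupoid.subset_setMul_setInv (hU : S.IsSubgroupoid U) :
    U ⊆ S.setMul U (S.setInv U) := by
  rw [hU.1, hU.setMul_self]

variable (S) in
structure IsInvariantSmall (U Q : Set G) : Prop where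
  src_mem : ∀ q ∈ Q, S.src q ∈ U
  setMul_eq : S.setMul Q U = Q
  setInv_setMul_subset : S.setMul (S.setInv Q) Q ⊆ U

theorem IsSubgroupoid.isInvariantSmall (hU : S.IsSubgroupoid U) : S.IsInvariantSmall U U :=
  ⟨fun _ ↦ hU.src_mem, hU.setMul_self, by rw [hU.1, hU.setMul_self]⟩

theorem IsInvariantSmall.subset_setMul (hQ : S.IsInvariantSmall U Q) : Q ⊆ S.setMul Q U :=
  fun q hq ↦ ⟨q, hq, S.src q, hQ.src_mem q hq, (S.tgt_of_src q).symm, (S.comp_src q).symm⟩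

theorem IsInvariantSmall.setMul_setInv_setMul_subset (hQ : S.IsInvariantSmall U Q) :
    S.setMul (S.setMul Q (S.setInv Q)) Q ⊆ Q := by
  rw [S.setMul_assoc]
  exact (S.setMul_mono subset_rfl hQ.setInv_setMul_subset).trans hQ.setMul_eq.le

theorem IsInvariantSmall.setMul (hQ : S.IsInvariantSmall U Q) (hT : S.IsInvariantSmall V T)
    (hUT : U ⊆ S.setMul T (S.setInv T)) : S.IsInvariantSmall V (S.setMul Q T) where
  src_mem := by
    rintro _ ⟨q, -, t, ht, hqt, rfl⟩
    rw [S.src_comp q t hqt]; exact hT.src_mem t ht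
  setMul_eq := by rw [S.setMul_assoc, hT.setMul_eq]
  setInv_setMul_subset := calc
    S.setMul (S.setInv (S.setMul Q T)) (S.setMul Q T)
        = S.setMul (S.setInv T) (S.setMul (S.setMul (S.setInv Q) Q) T) := by
          simp only [S.setInv_setMul, S.setMul_assoc]
    _ ⊆ S.setMul (S.setInv T) (S.setMul (S.setMul T (S.setInv T)) T) :=
          S.setMul_mono subset_rfl (S.setMul_mono (hQ.setInv_setMul_subset.trans hUT) subset_rfl)
    _ ⊆ S.setMul (S.setInv T) T := S.setMul_mono subset_rfl hT.setMul_setInv_setMul_subset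
    _ ⊆ V := hT.setInv_setMul_subset

theorem IsInvariantSmall.setMul_setInv_subset (hQ : S.IsInvariantSmall U Q)
    (hUT : U ⊆ S.setMul T (S.setInv T)) :
    S.setMul Q (S.setInv Q) ⊆ S.setMul (S.setMul Q T) (S.setInv (S.setMul Q T)) := calc
  S.setMul Q (S.setInv Q) ⊆ S.setMul (S.setMul Q (S.setMul T (S.setInv T))) (S.setInv Q) :=
        S.setMul_mono (hQ.subset_setMul.trans (S.setMul_mono subset_rfl hUT)) subset_rfl
  _ = S.setMul (S.setMul Q T) (S.setInv (S.setMul Q T)) := by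
        simp only [S.setInv_setMul, S.setMul_assoc]

variable (S) in
theorem exists_mem_tgt_eq {w : G} (hw : w ∈ S.setMul Q (S.setInv Q)) (hunit : S.src w = w) :
    ∃ t ∈ Q, S.tgt t = w := by
  obtain ⟨_, -, _, ⟨s, hs, rfl⟩, hc, rfl⟩ := hw
  refine ⟨s, hs, ?_⟩
  rw [← hunit, S.src_comp _ _ hc, S.src_inv]

variable (S) in
theorem self_mem_leftTrans {g : G} (hg : S.src g ∈ U) : g ∈ S.leftTrans g U :=
  ⟨S.src g, hg, (S.tgt_of_src g).symm, (S.comp_src g).symm⟩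

variable (S) in
theorem tgt_of_mem_leftTrans {g k : G} (hk : k ∈ S.leftTrans g U) : S.tgt k = S.tgt g := by
  obtain ⟨u, -, hc, rfl⟩ := hk
  exact S.tgt_comp g u hc

theorem IsInvariantSmall.leftTrans_setMul (hQ : S.IsInvariantSmall V Q)
    (hWQ : W ⊆ S.setMul Q (S.setInv Q)) {k t : G} (hk : S.src k ∈ W) (ht : t ∈ Q)
    (htk : S.tgt t = S.src k) :
    S.setMul (S.leftTrans k W) Q = S.leftTrans (S.comp k t) V := by
  have hkt : S.src (S.comp k t) = S.src t := S.src_comp k t htk.symm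
  apply Set.Subset.antisymm
  · rintro _ ⟨_, ⟨w, hw, (hkw : S.src k = _), rfl⟩, t₁, ht₁, (hwt₁ : S.src _ = _), rfl⟩
    rw [S.src_comp k w hkw] at hwt₁
    have hwt₁Q : S.comp w t₁ ∈ Q :=
      hQ.setMul_setInv_setMul_subset ⟨w, hWQ hw, t₁, ht₁, hwt₁, rfl⟩
    have htgt : S.tgt (S.comp w t₁) = S.tgt t := by rw [S.tgt_comp w t₁ hwt₁, ← hkw, htk]
    have hu : S.comp (S.inv t) (S.comp w t₁) ∈ V :=
      hQ.setInv_setMul_subset ⟨S.inv t, ⟨t, ht, rfl⟩, S.comp w t₁, hwt₁Q,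
        by rw [Composable, S.src_inv, htgt], rfl⟩
    refine ⟨_, hu, by rw [Composable, hkt, S.tgt_comp _ _ (by rw [S.src_inv, htgt]),
      S.tgt_inv], ?_⟩
    rw [S.comp_assoc k w t₁ hkw hwt₁, S.comp_assoc k t _ htk.symm
      (by rw [S.tgt_comp _ _ (by rw [S.src_inv, htgt]), S.tgt_inv]),
      S.comp_inv_cancel_left htgt]
  · rintro _ ⟨u, hu, (htu : S.src _ = _), rfl⟩
    rw [hkt] at htu
    have htuQ : S.comp t u ∈ Q := by rw [← hQ.setMul_eq]; exact ⟨t, ht, u, hu, htu, rfl⟩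
    refine ⟨k, S.self_mem_leftTrans hk, S.comp t u, htuQ,
      by rw [Composable, S.tgt_comp t u htu, htk], ?_⟩
    exact S.comp_assoc k t u htk.symm htu

theorem IsSubgroupoid.leftTrans_setMul_of_subset {W₁ : Set G} (hW : S.IsSubgroupoid W)
    (hW₁W : W₁ ⊆ W) {m : G} (hm : S.src m ∈ W₁) :
    S.setMul (S.leftTrans m W₁) W = S.leftTrans m W := by
  rw [hW.isInvariantSmall.leftTrans_setMul (hW₁W.trans hW.subset_setMul_setInv) hm
    (hW₁W hm) (S.tgt_of_src m), S.comp_src]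

theorem IsInvariantSmall.unit_leftTrans_setMul {x : G} (hx : S.src x = x)
    (hQ : S.IsInvariantSmall U Q) (hWQ : W ⊆ S.setMul Q (S.setInv Q)) (hxW : x ∈ W) {g : G}
    (hg : g ∈ Q) (hgx : S.tgt g = x) :
    S.setMul (S.leftTrans x W) Q = S.leftTrans g U := by
  rw [hQ.leftTrans_setMul hWQ (by rwa [hx]) hg (by rw [hgx, hx]), ← hgx, S.tgt_comp_self]

variable (S) in
theorem CosetFib.ext {y : G} {C D : S.CosetFib U y} (h : C.val.val = D.val.val) : C = D :=
  Subtype.ext (Subtype.ext h)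

variable (S) in
theorem exists_cosetFib_eq_leftTrans {y g : G} (hg : S.src g ∈ U) (hgy : S.tgt g = y) :
    ∃ E : S.CosetFib U y, E.val.val = S.leftTrans g U :=
  ⟨⟨S.cosetMk U g hg, fun _ hk ↦ (S.tgt_of_mem_leftTrans hk).trans hgy⟩, rfl⟩

end Cosets

section Topology

variable {G : Type*} [TopologicalSpace G] {S : Groupoidal G}

theorem IsTopological.isOpen_setInv (hTop : S.IsTopological) {A : Set G} (hA : IsOpen A) :
    IsOpen (S.setInv A) := by
  rw [S.setInv_eq_preimage]; exact hA.preimage hTop.continuous_inv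

theorem IsTopological.isOpenMap_tgt (hTop : S.IsTopological) (hOpen : IsOpenMap S.src) :
    IsOpenMap S.tgt := by
  have htgt : S.tgt = S.src ∘ S.inv := funext fun g ↦ (S.src_inv g).symm
  rw [htgt]
  exact hOpen.comp fun A hA ↦ hTop.isOpen_setInv hA

theorem IsTopological.exists_isOpen_comp_mem (hTop : S.IsTopological) {g₀ h₀ : G}
    (hc : S.src g₀ = S.tgt h₀) {O : Set G} (hO : IsOpen O) (hmem : S.comp g₀ h₀ ∈ O) :
    ∃ A B : Set G, IsOpen A ∧ IsOpen B ∧ g₀ ∈ A ∧ h₀ ∈ B ∧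
      ∀ g ∈ A, ∀ h ∈ B, S.src g = S.tgt h → S.comp g h ∈ O := by
  obtain ⟨Ω, hΩ, hΩO⟩ := isOpen_induced_iff.mp (hO.preimage hTop.continuous_comp)
  have hmemΩ (p : {p : G × G // S.Composable p.1 p.2}) : p.1 ∈ Ω ↔ S.comp p.1.1 p.1.2 ∈ O :=
    Set.ext_iff.mp hΩO p
  obtain ⟨A, B, hA, hB, hgA, hhB, hAB⟩ :=
    isOpen_prod_iff.mp hΩ g₀ h₀ ((hmemΩ ⟨(g₀, h₀), hc⟩).mpr hmem)
  exact ⟨A, B, hA, hB, hgA, hhB, fun g hg h hh hgh ↦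
    (hmemΩ ⟨(g, h), hgh⟩).mp (hAB (Set.mk_mem_prod hg hh))⟩

/-- Near `r₀ t₀`, every `q` is `(q t⁻¹) t` with `q t⁻¹` near `r₀` and `t ∈ T` over `src q`:
openness of `tgt` provides such `t`. -/
theorem IsTopological.isOpen_setMul (hTop : S.IsTopological) (hOpen : IsOpenMap S.src)
    {R T : Set G} (hR : IsOpen R) (hT : IsOpen T) : IsOpen (S.setMul R T) := by
  rw [isOpen_iff_forall_mem_open]
  rintro _ ⟨r₀, hr₀, t₀, ht₀, (hc₀ : S.src r₀ = _), rfl⟩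
  obtain ⟨A, B, hA, hB, hqA, htB, hAB⟩ := hTop.exists_isOpen_comp_mem
    (by rw [S.src_comp _ _ hc₀, S.tgt_inv]) hR
    (by rwa [S.comp_inv_cancel_right hc₀] : S.comp (S.comp r₀ t₀) (S.inv t₀) ∈ R)
  refine ⟨A ∩ S.src ⁻¹' (S.tgt '' (B ∩ S.setInv T)), ?_, ?_, hqA, ?_⟩
  · rintro q ⟨hqA, _, ⟨hbB, t, ht, rfl⟩, hqt⟩
    rw [S.tgt_inv] at hqt
    exact ⟨S.comp q (S.inv t), hAB q hqA _ hbB (by rw [S.tgt_inv, hqt]), t, ht,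
      by rw [Composable, S.src_comp _ _ (by rw [S.tgt_inv, hqt]), S.src_inv],
      (S.inv_comp_cancel_right hqt.symm).symm⟩
  · exact hA.inter ((hTop.isOpenMap_tgt hOpen _ (hB.inter (hTop.isOpen_setInv hT))).preimage
      hTop.continuous_src)
  · rw [Set.mem_preimage, S.src_comp _ _ hc₀]
    exact ⟨S.inv t₀, ⟨htB, t₀, ht₀, rfl⟩, S.tgt_inv t₀⟩

end Topology

section Yoneda

variable {G : Type*} {S : Groupoidal G} {𝒰 : Set (Set G)} {𝒮 : Set G → Set (Set G)} {x y : G}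

theorem IsCanonHom.isCoherent_unitCosetFib
    {h : ∀ U : Set G, U ∈ 𝒰 → S.CosetFib U x → S.CosetFib U y} (hh : S.IsCanonHom 𝒰 𝒮 x y h)
    (hx : S.src x = x) (hsub : ∀ U ∈ 𝒰, S.IsSubgroupoid U) (hself : ∀ U ∈ 𝒰, U ∈ 𝒮 U) :
    S.IsCoherent 𝒰 x y fun U hU hxU ↦ h U hU (S.unitCosetFib U x hx hxU) :=
  fun _ hU hxU V hV _ hUV ↦ hh _ hU V hV V (hself V hV)
    (hUV.trans (hsub V hV).subset_setMul_setInv) _ _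
    ((hsub V hV).leftTrans_setMul_of_subset hUV (by rwa [hx])).symm

variable {a : ∀ U : Set G, U ∈ 𝒰 → x ∈ U → S.CosetFib U y}

theorem IsCoherent.setMul_eq_leftTrans (hcoh : S.IsCoherent 𝒰 x y a) {W₁ W V Q : Set G}
    (hW₁ : W₁ ∈ 𝒰) (hxW₁ : x ∈ W₁) (hW : W ∈ 𝒰) (hxW : x ∈ W) (hW₁W : W₁ ⊆ W)
    (hWsub : S.IsSubgroupoid W) {m : G} (hm : S.src m ∈ W₁)
    (ha : (a W₁ hW₁ hxW₁).val.val = S.leftTrans m W₁) (hQ : S.IsInvariantSmall V Q)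
    (hWQ : W ⊆ S.setMul Q (S.setInv Q)) {r : G} (hr : r ∈ Q) (hrm : S.tgt r = S.src m) :
    S.setMul (a W hW hxW).val.val Q = S.leftTrans (S.comp m r) V := by
  rw [hcoh W₁ hW₁ hxW₁ W hW hxW hW₁W, ha, hWsub.leftTrans_setMul_of_subset hW₁W hm,
    hQ.leftTrans_setMul hWQ (hW₁W hm) hr hrm]

theorem IsCoherent.exists_cosetFib_eq_setMul (hcoh : S.IsCoherent 𝒰 x y a) {U W R : Set G}
    (hW : W ∈ 𝒰) (hxW : x ∈ W) (hWsub : S.IsSubgroupoid W) (hR : S.IsInvariantSmall U R)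
    (hWR : W ⊆ S.setMul R (S.setInv R)) :
    ∃ E : S.CosetFib U y, E.val.val = S.setMul (a W hW hxW).val.val R := by
  obtain ⟨m, hm, ha⟩ := (a W hW hxW).val.prop
  have hmy : S.tgt m = y := (a W hW hxW).prop m (by rw [ha]; exact S.self_mem_leftTrans hm)
  obtain ⟨r, hr, hrm⟩ := S.exists_mem_tgt_eq (hWR hm) (S.src_src m)
  rw [hcoh.setMul_eq_leftTrans hW hxW hW hxW subset_rfl hWsub hm ha hR hWR hr hrm]
  exact S.exists_cosetFib_eq_leftTrans (by rw [S.src_comp m r hrm.symm]; exact hR.src_mem r hr)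
    (by rw [S.tgt_comp m r hrm.symm, hmy])

variable [TopologicalSpace G]

variable (S) in
structure IsCanonicalSetup (𝒰 : Set (Set G)) (𝒮 : Set G → Set (Set G)) : Prop where
  isTopological : S.IsTopological
  isOpenMap_src : IsOpenMap S.src
  isOpen : ∀ U ∈ 𝒰, IsOpen U
  isSubgroupoid : ∀ U ∈ 𝒰, S.IsSubgroupoid U
  exists_mem_subset : ∀ x ∈ S.units, ∀ W ∈ 𝓝 x, ∃ U ∈ 𝒰, x ∈ U ∧ U ⊆ W
  self_mem : ∀ U ∈ 𝒰, U ∈ 𝒮 U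
  isOpen_of_mem : ∀ U ∈ 𝒰, ∀ T ∈ 𝒮 U, IsOpen T
  isInvariantSmall : ∀ U ∈ 𝒰, ∀ T ∈ 𝒮 U, S.IsInvariantSmall U T
  isTopologicalBasis : ∀ U ∈ 𝒰,
    @TopologicalSpace.IsTopologicalBasis (S.Coset U) (S.cosetTop U)
      {B | ∃ T ∈ 𝒮 U, B = {C : S.Coset U |
        ∃ (g : G) (hg : S.src g ∈ U), g ∈ T ∧ C = S.cosetMk U g hg}}

theorem IsCanonicalSetup.exists_subset_setMul_setInv (hC : S.IsCanonicalSetup 𝒰 𝒮)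
    (hx : S.src x = x) {Q : Set G} (hQ : IsOpen Q) {g : G} (hg : g ∈ Q) (hgx : S.tgt g = x)
    {O : Set G} (hO : O ∈ 𝓝 x) : ∃ W ∈ 𝒰, x ∈ W ∧ W ⊆ O ∧ W ⊆ S.setMul Q (S.setInv Q) := by
  have hxQ : x ∈ S.setMul Q (S.setInv Q) :=
    ⟨g, hg, S.inv g, ⟨g, hg, rfl⟩, (S.tgt_inv g).symm, by rw [S.comp_inv_self, hgx]⟩
  have hQQ : IsOpen (S.setMul Q (S.setInv Q)) :=
    hC.isTopological.isOpen_setMul hC.isOpenMap_src hQ (hC.isTopological.isOpen_setInv hQ)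
  obtain ⟨W, hW, hxW, hWO⟩ :=
    hC.exists_mem_subset x hx _ (Filter.inter_mem hO (hQQ.mem_nhds hxQ))
  exact ⟨W, hW, hxW, fun _ hw ↦ (hWO hw).1, fun _ hw ↦ (hWO hw).2⟩

theorem IsCanonicalSetup.exists_presentation (hC : S.IsCanonicalSetup 𝒰 𝒮) (hx : S.src x = x)
    {U : Set G} (hU : U ∈ 𝒰) (C : S.CosetFib U x) :
    ∃ W ∈ 𝒰, x ∈ W ∧ ∃ R ∈ 𝒮 U, W ⊆ S.setMul R (S.setInv R) ∧
      C.val.val = S.setMul (S.leftTrans x W) R := by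
  let _ := S.cosetTop U
  obtain ⟨_, ⟨R, hR, rfl⟩, ⟨g, hgU, hgR, hCg⟩, -⟩ :=
    (hC.isTopologicalBasis U hU).exists_subset_of_mem_open (Set.mem_univ C.val) isOpen_univ
  have hgx : S.tgt g = x := C.prop g (by rw [hCg]; exact S.self_mem_leftTrans hgU)
  obtain ⟨W, hW, hxW, -, hWR⟩ := hC.exists_subset_setMul_setInv hx (hC.isOpen_of_mem U hU R hR)
    hgR hgx Filter.univ_mem
  refine ⟨W, hW, hxW, R, hR, hWR, ?_⟩
  rw [(hC.isInvariantSmall U hU R hR).unit_leftTrans_setMul hx hWR hxW hgR hgx, hCg]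
  rfl

theorem IsCanonHom.eq_of_unitCosetFib (hC : S.IsCanonicalSetup 𝒰 𝒮) (hx : S.src x = x)
    {h h' : ∀ U : Set G, U ∈ 𝒰 → S.CosetFib U x → S.CosetFib U y}
    (hh : S.IsCanonHom 𝒰 𝒮 x y h) (hh' : S.IsCanonHom 𝒰 𝒮 x y h')
    (heq : ∀ (U : Set G) (hU : U ∈ 𝒰) (hxU : x ∈ U),
      h U hU (S.unitCosetFib U x hx hxU) = h' U hU (S.unitCosetFib U x hx hxU)) :
    h = h' := by
  funext U hU C
  obtain ⟨W, hW, hxW, R, hR, hWR, hCW⟩ := hC.exists_presentation hx hU C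
  apply CosetFib.ext
  rw [hh W hW U hU R hR hWR (S.unitCosetFib W x hx hxW) C hCW,
    hh' W hW U hU R hR hWR (S.unitCosetFib W x hx hxW) C hCW, heq W hW hxW]

/-- Both sides are computed as `(m r) · V` from a common finer `a_{W₁} = m · W₁` and a point `r`
of `Q ∩ Q'`, which is nonempty over `x` because `Q` and `Q'` meet the same coset over `x`. -/
theorem IsCoherent.setMul_eq_of_setMul_eq (hC : S.IsCanonicalSetup 𝒰 𝒮) (hx : S.src x = x)
    (hcoh : S.IsCoherent 𝒰 x y a) {V W W' Q Q' : Set G} (hW : W ∈ 𝒰) (hxW : x ∈ W)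
    (hW' : W' ∈ 𝒰) (hxW' : x ∈ W') (hQ : S.IsInvariantSmall V Q) (hQo : IsOpen Q)
    (hQ' : S.IsInvariantSmall V Q') (hQ'o : IsOpen Q') (hWQ : W ⊆ S.setMul Q (S.setInv Q))
    (hW'Q' : W' ⊆ S.setMul Q' (S.setInv Q'))
    (heq : S.setMul (S.leftTrans x W) Q = S.setMul (S.leftTrans x W') Q') :
    S.setMul (a W hW hxW).val.val Q = S.setMul (a W' hW' hxW').val.val Q' := by
  obtain ⟨g, hgQ, hgx⟩ := S.exists_mem_tgt_eq (hWQ hxW) hx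
  obtain ⟨g', hg'Q', hg'x⟩ := S.exists_mem_tgt_eq (hW'Q' hxW') hx
  have hg'Q : g' ∈ Q := by
    have hg'g : g' ∈ S.leftTrans g V := by
      rw [← hQ.unit_leftTrans_setMul hx hWQ hxW hgQ hgx, heq,
        hQ'.unit_leftTrans_setMul hx hW'Q' hxW' hg'Q' hg'x]
      exact S.self_mem_leftTrans (hQ'.src_mem g' hg'Q')
    obtain ⟨v, hv, hgv, rfl⟩ := hg'g
    rw [← hQ.setMul_eq]
    exact ⟨g, hgQ, v, hv, hgv, rfl⟩
  obtain ⟨W₁, hW₁, hxW₁, hW₁WW', hW₁Q⟩ := hC.exists_subset_setMul_setInv hx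
    (hQo.inter hQ'o) ⟨hg'Q, hg'Q'⟩ hg'x
    (Filter.inter_mem ((hC.isOpen W hW).mem_nhds hxW) ((hC.isOpen W' hW').mem_nhds hxW'))
  obtain ⟨m, hm, ha⟩ := (a W₁ hW₁ hxW₁).val.prop
  obtain ⟨r, ⟨hrQ, hrQ'⟩, hrm⟩ := S.exists_mem_tgt_eq (hW₁Q hm) (S.src_src m)
  rw [hcoh.setMul_eq_leftTrans hW₁ hxW₁ hW hxW (fun _ hw ↦ (hW₁WW' hw).1)
      (hC.isSubgroupoid W hW) hm ha hQ hWQ hrQ hrm,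
    hcoh.setMul_eq_leftTrans hW₁ hxW₁ hW' hxW' (fun _ hw ↦ (hW₁WW' hw).2)
      (hC.isSubgroupoid W' hW') hm ha hQ' hW'Q' hrQ' hrm]

theorem IsCoherent.exists_isCanonHom (hC : S.IsCanonicalSetup 𝒰 𝒮) (hx : S.src x = x)
    (hcoh : S.IsCoherent 𝒰 x y a) :
    ∃ h : ∀ U : Set G, U ∈ 𝒰 → S.CosetFib U x → S.CosetFib U y, S.IsCanonHom 𝒰 𝒮 x y h ∧
      ∀ (U : Set G) (hU : U ∈ 𝒰) (hxU : x ∈ U),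
        h U hU (S.unitCosetFib U x hx hxU) = a U hU hxU := by
  have hval : ∀ (U : Set G) (hU : U ∈ 𝒰) (C : S.CosetFib U x),
      ∃ W, ∃ hW : W ∈ 𝒰, ∃ hxW : x ∈ W, ∃ R ∈ 𝒮 U, W ⊆ S.setMul R (S.setInv R) ∧
        C.val.val = S.setMul (S.leftTrans x W) R ∧
        ∃ E : S.CosetFib U y, E.val.val = S.setMul (a W hW hxW).val.val R := by
    intro U hU C
    obtain ⟨W, hW, hxW, R, hR, hWR, hCW⟩ := hC.exists_presentation hx hU C
    exact ⟨W, hW, hxW, R, hR, hWR, hCW, hcoh.exists_cosetFib_eq_setMul hW hxW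
      (hC.isSubgroupoid W hW) (hC.isInvariantSmall U hU R hR) hWR⟩
  choose W hW hxW R hR hWR hCW E hE using hval
  refine ⟨E, ?_, ?_⟩
  · intro U hU V hV T hT hUT C D hD
    have hRU := hC.isInvariantSmall U hU _ (hR U hU C)
    have hTV := hC.isInvariantSmall V hV T hT
    rw [hE, hE, S.setMul_assoc]
    refine hcoh.setMul_eq_of_setMul_eq hC hx _ _ _ _ (hC.isInvariantSmall V hV _ (hR V hV D))
      (hC.isOpen_of_mem V hV _ (hR V hV D)) (hRU.setMul hTV hUT)
      (hC.isTopological.isOpen_setMul hC.isOpenMap_src (hC.isOpen_of_mem U hU _ (hR U hU C))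
        (hC.isOpen_of_mem V hV T hT))
      (hWR V hV D) ((hWR U hU C).trans (hRU.setMul_setInv_subset hUT)) ?_
    rw [← hCW, hD, hCW, S.setMul_assoc]
  · intro U hU hxU
    have hUsub := hC.isSubgroupoid U hU
    obtain ⟨m, hm, ha⟩ := (a U hU hxU).val.prop
    apply CosetFib.ext
    rw [hE, hcoh.setMul_eq_of_setMul_eq hC hx _ _ hU hxU
      (hC.isInvariantSmall U hU _ (hR U hU _)) (hC.isOpen_of_mem U hU _ (hR U hU _))
      hUsub.isInvariantSmall (hC.isOpen U hU) (hWR U hU _) hUsub.subset_setMul_setInv,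
      ha, hUsub.leftTrans_setMul_of_subset subset_rfl hm]
    rw [← hCW, hUsub.leftTrans_setMul_of_subset subset_rfl (by rwa [hx])]
    rfl

end Yoneda

end Groupoidal

theorem topological_yoneda_nonarchimedean_general
    {G : Type*} [TopologicalSpace G]
    (S : Groupoidal G) (hTop : S.IsTopological) (hOpen : IsOpenMap S.src)
    (𝒰 : Set (Set G))
    (h𝒰 : ∀ U ∈ 𝒰, IsOpen U ∧ S.IsSubgroupoid U)
    (hbasis : ∀ x ∈ S.units, ∀ W ∈ nhds x, ∃ U ∈ 𝒰, x ∈ U ∧ U ⊆ W)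
    (𝒮 : Set G → Set (Set G))
    (h𝒮mem : ∀ U ∈ 𝒰, U ∈ 𝒮 U)
    (h𝒮props : ∀ U ∈ 𝒰, ∀ T ∈ 𝒮 U, IsOpen T ∧ T ⊆ S.src ⁻¹' U ∧
      S.setMul T U = T ∧ S.setMul (S.setInv T) T ⊆ U)
    (h𝒮basis : ∀ U ∈ 𝒰,
      @TopologicalSpace.IsTopologicalBasis (S.Coset U) (S.cosetTop U)
        {B | ∃ T ∈ 𝒮 U, B = {C : S.Coset U |
          ∃ (g : G) (hg : S.src g ∈ U), g ∈ T ∧ C = S.cosetMk U g hg}})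
    (x y : G) (hx : S.src x = x) :
    (∀ h : {h : ∀ U : Set G, U ∈ 𝒰 → S.CosetFib U x → S.CosetFib U y //
        S.IsCanonHom 𝒰 𝒮 x y h},
      S.IsCoherent 𝒰 x y fun U hU hxU =>
        h.val U hU (S.unitCosetFib U x hx hxU)) ∧
    (∀ h h' : {h : ∀ U : Set G, U ∈ 𝒰 → S.CosetFib U x → S.CosetFib U y //
        S.IsCanonHom 𝒰 𝒮 x y h},
      (∀ (U : Set G) (hU : U ∈ 𝒰) (hxU : x ∈ U),
        h.val U hU (S.unitCosetFib U x hx hxU) =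
          h'.val U hU (S.unitCosetFib U x hx hxU)) → h = h') ∧
    (∀ a : ∀ U : Set G, U ∈ 𝒰 → x ∈ U → S.CosetFib U y,
      S.IsCoherent 𝒰 x y a →
      ∃ h : {h : ∀ U : Set G, U ∈ 𝒰 → S.CosetFib U x → S.CosetFib U y //
          S.IsCanonHom 𝒰 𝒮 x y h},
        ∀ (U : Set G) (hU : U ∈ 𝒰) (hxU : x ∈ U),
          h.val U hU (S.unitCosetFib U x hx hxU) = a U hU hxU) := by
  have hC : S.IsCanonicalSetup 𝒰 𝒮 :=
    { isTopological := hTop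
      isOpenMap_src := hOpen
      isOpen := fun U hU ↦ (h𝒰 U hU).1
      isSubgroupoid := fun U hU ↦ (h𝒰 U hU).2
      exists_mem_subset := hbasis
      self_mem := h𝒮mem
      isOpen_of_mem := fun U hU T hT ↦ (h𝒮props U hU T hT).1
      isInvariantSmall := fun U hU T hT ↦ ⟨(h𝒮props U hU T hT).2.1,
        (h𝒮props U hU T hT).2.2.1, (h𝒮props U hU T hT).2.2.2⟩
      isTopologicalBasis := h𝒮basis }
  refine ⟨fun h ↦ h.prop.isCoherent_unitCosetFib hx hC.isSubgroupoid hC.self_mem,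
    fun h h' hhh' ↦ Subtype.ext (h.prop.eq_of_unitCosetFib hC hx h'.prop hhh'), fun a ha ↦ ?_⟩
  obtain ⟨h, hh, hha⟩ := ha.exists_isCanonHom hC hx
  exact ⟨⟨h, hh⟩, hha⟩

/-- **Topological Yoneda lemma for non-Archimedean groupoids.**  Let `G` be an
open non-Archimedean topological groupoid with a basis `𝒰` of open
subgroupoids and families `𝒮_U` of `U`-invariant `U`-small open subsets of
`σ⁻¹(U)` descending to bases of open sections of `G/U`, with `U ∈ 𝒮_U`, as in
the construction of the canonical étale structure `M`.  Then for all objects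
`x, y`, evaluation at the unit cosets `U_x` is a bijection from the set of
homomorphisms `M_x → M_y` onto the inverse limit `lim_{x ∈ U ∈ 𝒰} (G/U)_y`
along the projections `π_{U,V}` for `U ⊆ V` in `𝒰`. -/
theorem topological_yoneda_nonarchimedean
    {G : Type*} [TopologicalSpace G]
    (S : Groupoidal G) (hTop : S.IsTopological) (hOpen : IsOpenMap S.src)
    (𝒰 : Set (Set G))
    (h𝒰 : ∀ U ∈ 𝒰, IsOpen U ∧ S.IsSubgroupoid U)
    (hbasis : ∀ x ∈ S.units, ∀ W ∈ nhds x, ∃ U ∈ 𝒰, x ∈ U ∧ U ⊆ W)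
    (𝒮 : Set G → Set (Set G))
    (h𝒮mem : ∀ U ∈ 𝒰, U ∈ 𝒮 U)
    (h𝒮props : ∀ U ∈ 𝒰, ∀ T ∈ 𝒮 U, IsOpen T ∧ T ⊆ S.src ⁻¹' U ∧
      S.setMul T U = T ∧ S.setMul (S.setInv T) T ⊆ U)
    (h𝒮basis : ∀ U ∈ 𝒰,
      @TopologicalSpace.IsTopologicalBasis (S.Coset U) (S.cosetTop U)
        {B | ∃ T ∈ 𝒮 U, B = {C : S.Coset U |
          ∃ (g : G) (hg : S.src g ∈ U), g ∈ T ∧ C = S.cosetMk U g hg}})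
    (x y : G) (hx : S.src x = x) (hy : S.src y = y) :
    (∀ h : {h : ∀ U : Set G, U ∈ 𝒰 → S.CosetFib U x → S.CosetFib U y //
        S.IsCanonHom 𝒰 𝒮 x y h},
      S.IsCoherent 𝒰 x y fun U hU hxU =>
        h.val U hU (S.unitCosetFib U x hx hxU)) ∧
    (∀ h h' : {h : ∀ U : Set G, U ∈ 𝒰 → S.CosetFib U x → S.CosetFib U y //
        S.IsCanonHom 𝒰 𝒮 x y h},
      (∀ (U : Set G) (hU : U ∈ 𝒰) (hxU : x ∈ U),
        h.val U hU (S.unitCosetFib U x hx hxU) =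
          h'.val U hU (S.unitCosetFib U x hx hxU)) → h = h') ∧
    (∀ a : ∀ U : Set G, U ∈ 𝒰 → x ∈ U → S.CosetFib U y,
      S.IsCoherent 𝒰 x y a →
      ∃ h : {h : ∀ U : Set G, U ∈ 𝒰 → S.CosetFib U x → S.CosetFib U y //
          S.IsCanonHom 𝒰 𝒮 x y h},
        ∀ (U : Set G) (hU : U ∈ 𝒰) (hxU : x ∈ U),
          h.val U hU (S.unitCosetFib U x hx hxU) = a U hU hxU) :=
  topological_yoneda_nonarchimedean_general S hTop hOpen 𝒰 h𝒰 hbasis 𝒮 h𝒮mem h𝒮props h𝒮basis x y hx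
end
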